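/- Suppose Condition (2) holds: ∑_{i=1}^∞ w̃_i = ∞ and ∑_{i=1}^∞ w̃_i² < ∞, and there are no misbehaving ratings. Then for every estimation error ε ∈ [0,1], every m ∈ 𝓜, and every i ≥ 1, one has P[ |β_{i,m} − α_m| > ε ] ≤ 2·exp( −φ_i·ε² ). -/

import Mathlib

/-!
Scale the deviation by the product `ϕ`: `X_k = (β_{k,m} - α_m) / ϕ_{k-1}` satisfies
`X_{k+1} = X_k + (w̃_{k+1} / ϕ_k) (1{R_{k+1} = m} - p_k)`, where `p_k` is the conditional
probability of `R_{k+1} = m` given `𝓗_k` prescribed by the herding model. Conditioning on `𝓗_k`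
and applying Hoeffding's lemma to this Bernoulli increment gives
`E[exp (t X_{k+1})] ≤ exp (t² w̃_{k+1}² / (8 ϕ_k²)) E[exp (t X_k)]`, so `X_i` is sub-Gaussian
with variance proxy `V_i / 4`, `V_i = ∑_{j ≤ i} w̃_j² / ϕ_{j-1}²`. The Chernoff bound for both
tails at level `ε / ϕ_{i-1}` gives `2 exp (-2 ε² / (ϕ_{i-1}² V_i)) = 2 exp (-φ_i ε²)`.
-/

open MeasureTheory Filter

/-- Cumulative weight `∑_{j=1}^i w_j`. -/
noncomputable def Sw (w : ℕ → ℝ) (i : ℕ) : ℝ := ∑ j ∈ Finset.Icc 1 i, w j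

/-- Normalized weight `w̃_i = w_i / ∑_{j=1}^i w_j`. -/
noncomputable def wnorm (w : ℕ → ℝ) (i : ℕ) : ℝ := w i / Sw w i

/-- Historical collective opinion
`β_{i,m} = (∑_{j=1}^i w_j 1{R_j = m}) / (∑_{j=1}^i w_j)`. -/
noncomputable def betaH {Ω : Type*} (w : ℕ → ℝ) (R : ℕ → Ω → ℕ) (i m : ℕ) (ω : Ω) : ℝ :=
  (∑ j ∈ Finset.Icc 1 i, w j * (if R j ω = m then (1 : ℝ) else 0)) / Sw w i

/-- `𝓗_i`: the σ-algebra generated by `R_1, …, R_i` (trivial for `i = 0`). -/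
def Hsig {Ω : Type*} (R : ℕ → Ω → ℕ) (i : ℕ) : MeasurableSpace Ω :=
  ⨆ j ∈ Finset.Icc 1 i, MeasurableSpace.comap (R j) ⊤

/-- `ϕ_j = ∏_{ℓ=1}^j [1 − w̃_{ℓ+1} (1 − γ_ℓ + η_ℓ γ_ℓ)]` (with `ϕ_0 = 1`),
where `wt` is the sequence of normalized weights. -/
noncomputable def varphi (wt γ η : ℕ → ℝ) (j : ℕ) : ℝ :=
  ∏ ℓ ∈ Finset.Icc 1 j, (1 - wt (ℓ + 1) * (1 - γ ℓ + η ℓ * γ ℓ))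

/-- Convergence-speed metric `φ_i = 1 / ((ϕ_{i−1}²/2) · ∑_{j=1}^i w̃_j²/ϕ_{j−1}²)`. -/
noncomputable def phiSpeed (wt γ η : ℕ → ℝ) (i : ℕ) : ℝ :=
  1 / ((varphi wt γ η (i - 1)) ^ 2 / 2 *
    ∑ j ∈ Finset.Icc 1 i, (wt j) ^ 2 / (varphi wt γ η (j - 1)) ^ 2)

open Real ProbabilityTheory

theorem bernoulli_mgf_le {p : ℝ} (hp : p ∈ Set.Icc (0 : ℝ) 1) (s : ℝ) :
    p * exp (s * (1 - p)) + (1 - p) * exp (-(s * p)) ≤ exp (s ^ 2 / 8) := by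
  let q : unitInterval := ⟨p, hp⟩
  have hsupp : ∀ᵐ x ∂Ber((1 : ℝ), 0, q), x ∈ Set.Icc (0 : ℝ) 1 :=
    ae_iff.2 (bernoulliMeasure_apply_of_notMem_of_notMem q measurableSet_Icc.compl
      (by simp) (by simp))
  have hmean : ∫ x, x ∂Ber((1 : ℝ), 0, q) = p := by simp [integral_bernoulliMeasure, q]
  have h := (hasSubgaussianMGF_of_mem_Icc aemeasurable_id hsupp).mgf_le s
  simp only [mgf, id, hmean, integral_bernoulliMeasure] at h
  convert h using 1
  · simp [q]
  · norm_num; ring_nf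

section ConditionalHoeffding

variable {Ω : Type*} {m mΩ : MeasurableSpace Ω} {μ : Measure Ω}

theorem integral_mul_eq_integral_mul_of_condExp_ae_eq (hm : m ≤ mΩ) [SigmaFinite (μ.trim hm)]
    {F I p : Ω → ℝ} (hF : StronglyMeasurable[m] F) (hFI : Integrable (F * I) μ)
    (hI : Integrable I μ) (hIp : μ[I|m] =ᵐ[μ] p) :
    ∫ ω, F ω * I ω ∂μ = ∫ ω, F ω * p ω ∂μ := calc
  _ = ∫ ω, (μ[F * I|m]) ω ∂μ := (integral_condExp hm).symm
  _ = ∫ ω, F ω * p ω ∂μ := integral_congr_ae <| by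
    filter_upwards [condExp_mul_of_stronglyMeasurable_left hF hFI hI, hIp] with ω h1 h2
    rw [h1, Pi.mul_apply, h2]

theorem integral_exp_add_mul_sub_le_of_condExp_ae_eq [IsFiniteMeasure μ] (hm : m ≤ mΩ)
    {Y I p : Ω → ℝ} (hY : StronglyMeasurable[m] Y) (hYint : Integrable (fun ω => exp (Y ω)) μ)
    (hI : Measurable I) (hI01 : ∀ ω, I ω = 0 ∨ I ω = 1)
    (hp : StronglyMeasurable[m] p) (hp01 : ∀ ω, p ω ∈ Set.Icc (0 : ℝ) 1)
    (hIp : μ[I|m] =ᵐ[μ] p) (s : ℝ) :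
    ∫ ω, exp (Y ω + s * (I ω - p ω)) ∂μ ≤ exp (s ^ 2 / 8) * ∫ ω, exp (Y ω) ∂μ := by
  have hI_bdd : ∀ ω, ‖I ω‖ ≤ 1 := fun ω => by rcases hI01 ω with h | h <;> simp [h]
  set A : Ω → ℝ := fun ω => exp (Y ω) * exp (-(s * p ω))
  have hA : StronglyMeasurable[m] A := (continuous_exp.comp_stronglyMeasurable hY).mul
    (continuous_exp.comp_stronglyMeasurable (hp.const_mul s).neg)
  have hAint : Integrable A μ := by
    refine hYint.mul_bdd (c := exp |s|) ((continuous_exp.comp_stronglyMeasurable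
      (hp.const_mul s).neg).mono hm).aestronglyMeasurable (ae_of_all _ fun ω => ?_)
    obtain ⟨hp0, hp1⟩ := hp01 ω
    rw [norm_of_nonneg (exp_pos _).le, exp_le_exp]
    nlinarith [neg_abs_le s, abs_nonneg s]
  have hAIint : Integrable (fun ω => A ω * (exp s - 1) * I ω) μ :=
    (hAint.mul_const _).mul_bdd hI.aestronglyMeasurable (ae_of_all _ hI_bdd)
  have hApint : Integrable (fun ω => A ω * (exp s - 1) * p ω) μ :=
    (hAint.mul_const _).mul_bdd (hp.mono hm).aestronglyMeasurable
      (ae_of_all _ fun ω => by rw [norm_of_nonneg (hp01 ω).1]; exact (hp01 ω).2)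
  have hIint : Integrable I μ :=
    (integrable_const (1 : ℝ)).mono' hI.aestronglyMeasurable (ae_of_all _ hI_bdd)
  have hexp : ∀ q, exp (s * (1 - q)) = exp s * exp (-(s * q)) := fun q => by
    rw [← exp_add]; ring_nf
  -- `I` takes only the values `0` and `1`, so `exp (s * I) = 1 + (exp s - 1) * I`.
  have hsplit : ∀ ω, exp (Y ω + s * (I ω - p ω)) = A ω + A ω * (exp s - 1) * I ω := by
    intro ω
    rcases hI01 ω with h | h
    · rw [h, zero_sub, mul_neg, exp_add]; ring
    · rw [h, exp_add, hexp]; ring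
  have hpull := integral_mul_eq_integral_mul_of_condExp_ae_eq hm
    (hA.mul_const (exp s - 1)) hAIint hIint hIp
  calc ∫ ω, exp (Y ω + s * (I ω - p ω)) ∂μ
      = ∫ ω, A ω + A ω * (exp s - 1) * I ω ∂μ := integral_congr_ae (ae_of_all _ hsplit)
    _ = ∫ ω, A ω + A ω * (exp s - 1) * p ω ∂μ := by
        rw [integral_add hAint hAIint, integral_add hAint hApint, hpull]
    _ ≤ ∫ ω, exp (Y ω) * exp (s ^ 2 / 8) ∂μ := by
        refine integral_mono (hAint.add hApint) (hYint.mul_const _) fun ω => ?_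
        calc A ω + A ω * (exp s - 1) * p ω
            = exp (Y ω) * (p ω * exp (s * (1 - p ω)) + (1 - p ω) * exp (-(s * p ω))) := by
              rw [hexp]; ring
          _ ≤ exp (Y ω) * exp (s ^ 2 / 8) :=
              mul_le_mul_of_nonneg_left (bernoulli_mgf_le (hp01 ω) s) (exp_pos _).le
    _ = exp (s ^ 2 / 8) * ∫ ω, exp (Y ω) ∂μ := by rw [integral_mul_const, mul_comm]

theorem ProbabilityTheory.HasSubgaussianMGF.measure_abs_ge_le [IsFiniteMeasure μ]
    {X : Ω → ℝ} {c : NNReal} (h : HasSubgaussianMGF X c μ) {ε : ℝ} (hε : 0 ≤ ε) :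
    μ {ω | ε ≤ |X ω|} ≤ ENNReal.ofReal (2 * exp (-ε ^ 2 / (2 * c))) := by
  have htail : ∀ {Z : Ω → ℝ}, HasSubgaussianMGF Z c μ →
      μ {ω | ε ≤ Z ω} ≤ ENNReal.ofReal (exp (-ε ^ 2 / (2 * c))) := fun hZ =>
    (ENNReal.le_ofReal_iff_toReal_le (measure_ne_top μ _) (exp_pos _).le).2
      (hZ.measure_ge_le hε)
  calc μ {ω | ε ≤ |X ω|} ≤ μ ({ω | ε ≤ X ω} ∪ {ω | ε ≤ (-X) ω}) :=
        measure_mono fun ω hω => by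
          rcases le_abs'.1 (show ε ≤ |X ω| from hω) with h | h
          · exact Or.inr (show ε ≤ -X ω by linarith)
          · exact Or.inl h
    _ ≤ μ {ω | ε ≤ X ω} + μ {ω | ε ≤ (-X) ω} := measure_union_le _ _
    _ ≤ _ := by
        rw [two_mul, ENNReal.ofReal_add (exp_pos _).le (exp_pos _).le]
        exact add_le_add (htail h) (htail h.neg)

end ConditionalHoeffding

section Weights

variable {w : ℕ → ℝ}

theorem Sw_succ (i : ℕ) : Sw w (i + 1) = Sw w i + w (i + 1) :=
  Finset.sum_Icc_succ_top (by omega) _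

theorem Sw_pos (hw : ∀ j, 0 ≤ w j) (hw1 : 0 < w 1) {i : ℕ} (hi : 1 ≤ i) : 0 < Sw w i :=
  hw1.trans_le <| Finset.single_le_sum (fun j _ => hw j) (Finset.mem_Icc.2 ⟨le_rfl, hi⟩)

theorem wnorm_one (hw1 : 0 < w 1) : wnorm w 1 = 1 := by
  simp [wnorm, Sw, hw1.ne']

theorem wnorm_nonneg (hw : ∀ j, 0 ≤ w j) (i : ℕ) : 0 ≤ wnorm w i :=
  div_nonneg (hw i) (Finset.sum_nonneg fun j _ => hw j)

theorem wnorm_lt_one (hw : ∀ j, 0 ≤ w j) (hw1 : 0 < w 1) {i : ℕ} (hi : 2 ≤ i) :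
    wnorm w i < 1 := by
  obtain ⟨k, rfl⟩ : ∃ k, i = k + 1 := ⟨i - 1, by omega⟩
  rw [wnorm, div_lt_one (Sw_pos hw hw1 (by omega)), Sw_succ]
  linarith [Sw_pos hw hw1 (i := k) (by omega)]

end Weights

theorem one_sub_mul_herding_pos {x g e : ℝ} (hx0 : 0 ≤ x) (hx1 : x < 1)
    (hg : g ∈ Set.Icc (0 : ℝ) 1) (he : e ∈ Set.Icc (0 : ℝ) 1) :
    0 < 1 - x * (1 - g + e * g) := by
  obtain ⟨hg0, hg1⟩ := hg
  obtain ⟨he0, he1⟩ := he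
  nlinarith [mul_le_mul_of_nonneg_left he1 hg0]

section Varphi

variable {wt γ η : ℕ → ℝ}

theorem varphi_succ (k : ℕ) :
    varphi wt γ η (k + 1) =
      varphi wt γ η k * (1 - wt (k + 2) * (1 - γ (k + 1) + η (k + 1) * γ (k + 1))) :=
  Finset.prod_Icc_succ_top (by omega) _

theorem varphi_pos (hwt0 : ∀ ℓ, 0 ≤ wt ℓ) (hwt1 : ∀ ℓ, 2 ≤ ℓ → wt ℓ < 1)
    (hγ : ∀ i, γ i ∈ Set.Icc (0 : ℝ) 1) (hη : ∀ i, η i ∈ Set.Icc (0 : ℝ) 1) (j : ℕ) :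
    0 < varphi wt γ η j :=
  Finset.prod_pos fun ℓ hℓ => one_sub_mul_herding_pos (hwt0 _)
    (hwt1 _ (by simp only [Finset.mem_Icc] at hℓ; omega)) (hγ ℓ) (hη ℓ)

end Varphi

section BetaH

variable {Ω : Type*} {w : ℕ → ℝ} {R : ℕ → Ω → ℕ} {m : ℕ}

theorem betaH_mem_Icc (hw : ∀ j, 0 ≤ w j) (hw1 : 0 < w 1) {i : ℕ} (hi : 1 ≤ i) (ω : Ω) :
    betaH w R i m ω ∈ Set.Icc (0 : ℝ) 1 := by
  have hS := Sw_pos hw hw1 hi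
  refine ⟨div_nonneg (Finset.sum_nonneg fun j _ => ?_) hS.le, (div_le_one hS).2 <|
    Finset.sum_le_sum fun j _ => ?_⟩ <;> split_ifs <;> simp [hw j]

theorem betaH_one (hw1 : 0 < w 1) (ω : Ω) :
    betaH w R 1 m ω = if R 1 ω = m then 1 else 0 := by
  simp only [betaH, Sw, Finset.Icc_self, Finset.sum_singleton]
  split_ifs <;> simp [hw1.ne']

theorem betaH_succ (hw : ∀ j, 0 ≤ w j) (hw1 : 0 < w 1) {i : ℕ} (hi : 1 ≤ i) (ω : Ω) :
    betaH w R (i + 1) m ω = (1 - wnorm w (i + 1)) * betaH w R i m ω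
      + wnorm w (i + 1) * (if R (i + 1) ω = m then 1 else 0) := by
  have hS := Sw_pos hw hw1 hi
  have hS' : Sw w i + w (i + 1) ≠ 0 := by linarith [hw (i + 1)]
  simp only [betaH, wnorm, Sw_succ]
  rw [Finset.sum_Icc_succ_top (by omega)]
  field_simp
  ring

theorem measurable_ite_eq {mΩ : MeasurableSpace Ω} {f : Ω → ℕ} (hf : Measurable f) (m : ℕ) :
    Measurable fun ω => if f ω = m then (1 : ℝ) else 0 :=
  Measurable.ite (hf (measurableSet_singleton m)) measurable_const measurable_const

theorem measurable_betaH_Hsig (i : ℕ) : Measurable[Hsig R i] (betaH w R i m) :=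
  (Finset.measurable_sum _ fun j hj => (measurable_ite_eq (Measurable.of_comap_le
    (le_iSup₂ (f := fun j _ => MeasurableSpace.comap (R j) ⊤) j hj)) m).const_mul _).div_const _

theorem Hsig_le [MeasurableSpace Ω] (hRmeas : ∀ i, Measurable (R i)) (i : ℕ) :
    Hsig R i ≤ ‹MeasurableSpace Ω› :=
  iSup₂_le fun j _ => (hRmeas j).comap_le

end BetaH

noncomputable def varSum (wt γ η : ℕ → ℝ) (i : ℕ) : ℝ :=
  ∑ j ∈ Finset.Icc 1 i, wt j ^ 2 / varphi wt γ η (j - 1) ^ 2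

theorem varSum_nonneg (wt γ η : ℕ → ℝ) (i : ℕ) : 0 ≤ varSum wt γ η i :=
  Finset.sum_nonneg fun _ _ => by positivity

theorem varSum_one {w γ η : ℕ → ℝ} (hw1 : 0 < w 1) : varSum (wnorm w) γ η 1 = 1 := by
  simp [varSum, varphi, wnorm_one hw1]

theorem varSum_succ (wt γ η : ℕ → ℝ) (k : ℕ) :
    varSum wt γ η (k + 1) = varSum wt γ η k + (wt (k + 1) / varphi wt γ η k) ^ 2 := by
  rw [varSum, Finset.sum_Icc_succ_top (by omega), div_pow, Nat.add_sub_cancel]; rfl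

theorem phiSpeed_eq (wt γ η : ℕ → ℝ) (i : ℕ) :
    phiSpeed wt γ η i = 2 / (varphi wt γ η (i - 1) ^ 2 * varSum wt γ η i) := by
  rw [phiSpeed, varSum]; ring

noncomputable def herdingProb {Ω : Type*} (w γ η : ℕ → ℝ) (R : ℕ → Ω → ℕ) (m : ℕ) (a : ℝ)
    (k : ℕ) (ω : Ω) : ℝ :=
  γ k * ((1 - η k) * betaH w R k m ω + η k * a) + (1 - γ k) * a

noncomputable def scaledDeviation {Ω : Type*} (w γ η : ℕ → ℝ) (R : ℕ → Ω → ℕ) (m : ℕ) (a : ℝ)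
    (k : ℕ) (ω : Ω) : ℝ :=
  (betaH w R k m ω - a) / varphi (wnorm w) γ η (k - 1)

section Deviation

variable {Ω : Type*} {w γ η : ℕ → ℝ} {R : ℕ → Ω → ℕ} {m : ℕ} {a : ℝ}

theorem herdingProb_mem_Icc (hw : ∀ j, 0 ≤ w j) (hw1 : 0 < w 1)
    (hγ : ∀ i, γ i ∈ Set.Icc (0 : ℝ) 1) (hη : ∀ i, η i ∈ Set.Icc (0 : ℝ) 1)
    (ha : a ∈ Set.Icc (0 : ℝ) 1) {k : ℕ} (hk : 1 ≤ k) (ω : Ω) :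
    herdingProb w γ η R m a k ω ∈ Set.Icc (0 : ℝ) 1 := by
  have hcombo : ∀ {θ x y : ℝ}, θ ∈ Set.Icc (0 : ℝ) 1 → x ∈ Set.Icc (0 : ℝ) 1 →
      y ∈ Set.Icc (0 : ℝ) 1 → θ * x + (1 - θ) * y ∈ Set.Icc (0 : ℝ) 1 := fun hθ hx hy => by
    simpa using convex_Icc (0 : ℝ) 1 hx hy hθ.1 (sub_nonneg.2 hθ.2) (add_sub_cancel _ _)
  have hinner := hcombo (hη k) ha (betaH_mem_Icc (R := R) (m := m) hw hw1 hk ω)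
  rw [add_comm] at hinner
  exact hcombo (hγ k) hinner ha

theorem scaledDeviation_one (hw1 : 0 < w 1) (ω : Ω) :
    scaledDeviation w γ η R m a 1 ω = (if R 1 ω = m then 1 else 0) - a := by
  simp [scaledDeviation, varphi, betaH_one hw1]

theorem scaledDeviation_succ (hw : ∀ j, 0 ≤ w j) (hw1 : 0 < w 1)
    (hγ : ∀ i, γ i ∈ Set.Icc (0 : ℝ) 1) (hη : ∀ i, η i ∈ Set.Icc (0 : ℝ) 1)
    {k : ℕ} (hk : 1 ≤ k) (ω : Ω) :
    scaledDeviation w γ η R m a (k + 1) ω = scaledDeviation w γ η R m a k ω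
      + wnorm w (k + 1) / varphi (wnorm w) γ η k
        * ((if R (k + 1) ω = m then 1 else 0) - herdingProb w γ η R m a k ω) := by
  obtain ⟨j, rfl⟩ : ∃ j, k = j + 1 := ⟨k - 1, by omega⟩
  have hϕ := varphi_pos (wnorm_nonneg hw) (fun _ => wnorm_lt_one hw hw1) hγ hη j
  have hρ := one_sub_mul_herding_pos (wnorm_nonneg hw (j + 2))
    (wnorm_lt_one hw hw1 (by omega)) (hγ (j + 1)) (hη (j + 1))
  simp only [scaledDeviation, herdingProb, Nat.add_sub_cancel, betaH_succ hw hw1 hk,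
    varphi_succ]
  set ρ := 1 - wnorm w (j + 2) * (1 - γ (j + 1) + η (j + 1) * γ (j + 1)) with hρ_def
  field_simp
  rw [hρ_def]
  ring

theorem scaledDeviation_mem_Icc (hw : ∀ j, 0 ≤ w j) (hw1 : 0 < w 1)
    (hγ : ∀ i, γ i ∈ Set.Icc (0 : ℝ) 1) (hη : ∀ i, η i ∈ Set.Icc (0 : ℝ) 1)
    {k : ℕ} (hk : 1 ≤ k) (ω : Ω) :
    scaledDeviation w γ η R m a k ω ∈ Set.Icc ((0 - a) / varphi (wnorm w) γ η (k - 1))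
      ((1 - a) / varphi (wnorm w) γ η (k - 1)) := by
  have hϕ := varphi_pos (wnorm_nonneg hw) (fun _ => wnorm_lt_one hw hw1) hγ hη (k - 1)
  obtain ⟨hβ0, hβ1⟩ := betaH_mem_Icc (R := R) (m := m) hw hw1 hk ω
  exact ⟨div_le_div_of_nonneg_right (by linarith) hϕ.le,
    div_le_div_of_nonneg_right (by linarith) hϕ.le⟩

theorem measurable_scaledDeviation_Hsig (k : ℕ) :
    Measurable[Hsig R k] (scaledDeviation w γ η R m a k) :=
  ((measurable_betaH_Hsig k).sub_const a).div_const _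

end Deviation

section MGF

variable {Ω : Type*} [MeasurableSpace Ω] {μ : Measure Ω} [IsProbabilityMeasure μ]
  {w γ η : ℕ → ℝ} {R : ℕ → Ω → ℕ} {m : ℕ} {a : ℝ}

theorem integral_exp_mul_scaledDeviation_le (hRmeas : ∀ i, Measurable (R i))
    (hw : ∀ j, 0 ≤ w j) (hw1 : 0 < w 1)
    (hγ : ∀ i, γ i ∈ Set.Icc (0 : ℝ) 1) (hη : ∀ i, η i ∈ Set.Icc (0 : ℝ) 1)
    (ha : a ∈ Set.Icc (0 : ℝ) 1) (hR1 : μ {ω | R 1 ω = m} = ENNReal.ofReal a)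
    (hmodel : ∀ i : ℕ, 1 ≤ i →
      μ[(fun ω => if R (i + 1) ω = m then (1 : ℝ) else 0) | Hsig R i]
        =ᵐ[μ] herdingProb w γ η R m a i)
    (t : ℝ) {k : ℕ} (hk : 1 ≤ k) :
    ∫ ω, exp (t * scaledDeviation w γ η R m a k ω) ∂μ
      ≤ exp (t ^ 2 * varSum (wnorm w) γ η k / 8) := by
  have hind01 : ∀ j ω, (if R j ω = m then (1 : ℝ) else 0) = 0 ∨
      (if R j ω = m then (1 : ℝ) else 0) = 1 := fun j ω => by split_ifs <;> simp
  induction k, hk using Nat.le_induction with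
  | base =>
    -- `X_1 = 1{R_1 = m} - a` is a single step from `0` conditioned on the trivial σ-algebra.
    have hind : (fun ω => if R 1 ω = m then (1 : ℝ) else 0) = {ω | R 1 ω = m}.indicator 1 := by
      ext ω; simp [Set.indicator_apply]
    have hmean : μ[(fun ω => if R 1 ω = m then (1 : ℝ) else 0) | ⊥] = fun _ => a := by
      have hA : MeasurableSet {ω | R 1 ω = m} := hRmeas 1 (measurableSet_singleton m)
      rw [condExp_bot, hind, integral_indicator_one hA, measureReal_def, hR1,
        ENNReal.toReal_ofReal ha.1]
    have h := integral_exp_add_mul_sub_le_of_condExp_ae_eq (Y := fun _ => 0) bot_le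
      stronglyMeasurable_const (by simp) (measurable_ite_eq (hRmeas 1) m) (hind01 1)
      stronglyMeasurable_const (fun _ => ha) (ae_of_all _ (congrFun hmean)) t
    simpa [scaledDeviation_one hw1, varSum_one hw1] using h
  | succ k hk ih =>
    have hdev : Measurable[Hsig R k] (scaledDeviation w γ η R m a k) :=
      measurable_scaledDeviation_Hsig k
    have hY : StronglyMeasurable[Hsig R k] fun ω => t * scaledDeviation w γ η R m a k ω :=
      (hdev.const_mul t).stronglyMeasurable
    have hp : StronglyMeasurable[Hsig R k] (herdingProb w γ η R m a k) :=
      (((measurable_betaH_Hsig k).const_mul _ |>.add_const _ |>.const_mul _).add_const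
        _).stronglyMeasurable
    have hYint : Integrable (fun ω => exp (t * scaledDeviation w γ η R m a k ω)) μ :=
      integrable_exp_mul_of_mem_Icc (hdev.mono (Hsig_le hRmeas k) le_rfl).aemeasurable
        (ae_of_all _ (scaledDeviation_mem_Icc hw hw1 hγ hη hk))
    set c := wnorm w (k + 1) / varphi (wnorm w) γ η k with hc
    calc ∫ ω, exp (t * scaledDeviation w γ η R m a (k + 1) ω) ∂μ
        = ∫ ω, exp (t * scaledDeviation w γ η R m a k ω + t * c *
            ((if R (k + 1) ω = m then 1 else 0) - herdingProb w γ η R m a k ω)) ∂μ := by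
          refine integral_congr_ae (ae_of_all _ fun ω => ?_)
          simp only [scaledDeviation_succ hw hw1 hγ hη hk, ← hc]
          ring_nf
      _ ≤ exp ((t * c) ^ 2 / 8) * ∫ ω, exp (t * scaledDeviation w γ η R m a k ω) ∂μ :=
          integral_exp_add_mul_sub_le_of_condExp_ae_eq (Hsig_le hRmeas k) hY hYint
            (measurable_ite_eq (hRmeas (k + 1)) m) (hind01 (k + 1)) hp
            (herdingProb_mem_Icc hw hw1 hγ hη ha hk) (hmodel k hk) (t * c)
      _ ≤ exp ((t * c) ^ 2 / 8) * exp (t ^ 2 * varSum (wnorm w) γ η k / 8) := by gcongr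
      _ = exp (t ^ 2 * varSum (wnorm w) γ η (k + 1) / 8) := by
          rw [← exp_add, varSum_succ, ← hc]; ring_nf

theorem hasSubgaussianMGF_scaledDeviation (hRmeas : ∀ i, Measurable (R i))
    (hw : ∀ j, 0 ≤ w j) (hw1 : 0 < w 1)
    (hγ : ∀ i, γ i ∈ Set.Icc (0 : ℝ) 1) (hη : ∀ i, η i ∈ Set.Icc (0 : ℝ) 1)
    (ha : a ∈ Set.Icc (0 : ℝ) 1) (hR1 : μ {ω | R 1 ω = m} = ENNReal.ofReal a)
    (hmodel : ∀ i : ℕ, 1 ≤ i →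
      μ[(fun ω => if R (i + 1) ω = m then (1 : ℝ) else 0) | Hsig R i]
        =ᵐ[μ] herdingProb w γ η R m a i)
    {i : ℕ} (hi : 1 ≤ i) :
    HasSubgaussianMGF (scaledDeviation w γ η R m a i)
      (varSum (wnorm w) γ η i / 4).toNNReal μ where
  integrable_exp_mul _ := integrable_exp_mul_of_mem_Icc
    ((measurable_scaledDeviation_Hsig i).mono (Hsig_le hRmeas i) le_rfl).aemeasurable
    (ae_of_all _ (scaledDeviation_mem_Icc hw hw1 hγ hη hi))
  mgf_le t :=
    (integral_exp_mul_scaledDeviation_le hRmeas hw hw1 hγ hη ha hR1 hmodel t hi).trans_eq (by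
      rw [Real.coe_toNNReal _ (by linarith [varSum_nonneg (wnorm w) γ η i])]; ring_nf)

end MGF

theorem stmt_3_general
    {Ω : Type*} [MeasurableSpace Ω] (μ : Measure Ω) [IsProbabilityMeasure μ]
    (M : ℕ)
    (α : ℕ → ℝ) (hα : ∀ m ∈ Finset.Icc 1 M, α m ∈ Set.Icc (0 : ℝ) 1)
    (R : ℕ → Ω → ℕ)
    (hRmeas : ∀ i, Measurable (R i))
    (w : ℕ → ℝ) (hw : ∀ j, 0 ≤ w j) (hw1 : 0 < w 1)
    (γ : ℕ → ℝ) (hγ : ∀ i, γ i ∈ Set.Icc (0 : ℝ) 1)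
    (η : ℕ → ℝ) (hη : ∀ i, η i ∈ Set.Icc (0 : ℝ) 1)
    -- `θ_0 = α`: the first rating is unbiased, `P[R_1 = m] = α_m`
    (hR1 : ∀ m ∈ Finset.Icc 1 M, μ {ω | R 1 ω = m} = ENNReal.ofReal (α m))
    -- linear herding model:
    -- `P[R_{i+1} = m | 𝓗_i] = γ_i ((1 − η_i) β_{i,m} + η_i α_m) + (1 − γ_i) α_m` a.s.
    (hmodel : ∀ i : ℕ, 1 ≤ i → ∀ m ∈ Finset.Icc 1 M,
      μ[(fun ω => if R (i + 1) ω = m then (1 : ℝ) else 0) | Hsig R i]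
        =ᵐ[μ] fun ω =>
          γ i * ((1 - η i) * betaH w R i m ω + η i * α m) + (1 - γ i) * α m) :
    ∀ ε ∈ Set.Icc (0 : ℝ) 1, ∀ m ∈ Finset.Icc 1 M, ∀ i : ℕ, 1 ≤ i →
      μ {ω | ε < |betaH w R i m ω - α m|}
        ≤ ENNReal.ofReal (2 * Real.exp (-(phiSpeed (wnorm w) γ η i) * ε ^ 2)) := by
  intro ε hε m hm i hi
  have hϕ := varphi_pos (wnorm_nonneg hw) (fun _ => wnorm_lt_one hw hw1) hγ hη (i - 1)
  have hX := hasSubgaussianMGF_scaledDeviation hRmeas hw hw1 hγ hη (hα m hm) (hR1 m hm)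
    (fun k hk => hmodel k hk m hm) hi
  calc μ {ω | ε < |betaH w R i m ω - α m|}
      ≤ μ {ω | ε / varphi (wnorm w) γ η (i - 1) ≤ |scaledDeviation w γ η R m (α m) i ω|} :=
        measure_mono fun ω (hω : ε < _) => by
          rw [Set.mem_ofPred_eq, scaledDeviation, abs_div, abs_of_pos hϕ]
          exact div_le_div_of_nonneg_right hω.le hϕ.le
    _ ≤ ENNReal.ofReal (2 * Real.exp (-(ε / varphi (wnorm w) γ η (i - 1)) ^ 2 /
          (2 * (varSum (wnorm w) γ η i / 4).toNNReal))) :=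
        hX.measure_abs_ge_le (div_nonneg hε.1 hϕ.le)
    _ = _ := by
        rw [Real.coe_toNNReal _ (by linarith [varSum_nonneg (wnorm w) γ η i]), phiSpeed_eq]
        ring_nf

/-- Under the linear herding model with no misbehaving ratings and
Condition (2), for every `ε ∈ [0,1]`, `m ∈ 𝓜`, `i ≥ 1`:
`P[ |β_{i,m} − α_m| > ε ] ≤ 2 exp(−φ_i ε²)`. -/
theorem stmt_3
    {Ω : Type*} [MeasurableSpace Ω] (μ : Measure Ω) [IsProbabilityMeasure μ]
    (M : ℕ) (hM : 1 ≤ M)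
    (α : ℕ → ℝ) (hα : ∀ m ∈ Finset.Icc 1 M, α m ∈ Set.Icc (0 : ℝ) 1)
    (hα1 : ∑ m ∈ Finset.Icc 1 M, α m = 1)
    (R : ℕ → Ω → ℕ) (hRrange : ∀ i, 1 ≤ i → ∀ ω, R i ω ∈ Finset.Icc 1 M)
    (hRmeas : ∀ i, Measurable (R i))
    (w : ℕ → ℝ) (hw : ∀ j, 0 ≤ w j) (hw1 : 0 < w 1)
    (γ : ℕ → ℝ) (hγ : ∀ i, γ i ∈ Set.Icc (0 : ℝ) 1)
    (hγsup : ∃ g, g < 1 ∧ ∀ i, γ i ≤ g)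
    (η : ℕ → ℝ) (hη : ∀ i, η i ∈ Set.Icc (0 : ℝ) 1)
    -- `θ_0 = α`: the first rating is unbiased, `P[R_1 = m] = α_m`
    (hR1 : ∀ m ∈ Finset.Icc 1 M, μ {ω | R 1 ω = m} = ENNReal.ofReal (α m))
    -- linear herding model:
    -- `P[R_{i+1} = m | 𝓗_i] = γ_i ((1 − η_i) β_{i,m} + η_i α_m) + (1 − γ_i) α_m` a.s.
    (hmodel : ∀ i : ℕ, 1 ≤ i → ∀ m ∈ Finset.Icc 1 M,
      μ[(fun ω => if R (i + 1) ω = m then (1 : ℝ) else 0) | Hsig R i]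
        =ᵐ[μ] fun ω =>
          γ i * ((1 - η i) * betaH w R i m ω + η i * α m) + (1 - γ i) * α m)
    -- Condition (2): `∑ w̃_i = ∞` and `∑ w̃_i² < ∞`
    (hdiv : Tendsto (fun n => ∑ i ∈ Finset.Icc 1 n, wnorm w i) atTop atTop)
    (hsq : Summable fun i : ℕ => (wnorm w (i + 1)) ^ 2) :
    ∀ ε ∈ Set.Icc (0 : ℝ) 1, ∀ m ∈ Finset.Icc 1 M, ∀ i : ℕ, 1 ≤ i →
      μ {ω | ε < |betaH w R i m ω - α m|}
        ≤ ENNReal.ofReal (2 * Real.exp (-(phiSpeed (wnorm w) γ η i) * ε ^ 2)) :=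
  stmt_3_general μ M α hα R hRmeas w hw hw1 γ hγ η hη hR1 hmodel
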